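/- arXiv:2002.03438 — 4 statements merged into one kernel-verified Lean document; each statement's English description precedes it below -/
import Mathlib

section
/- (Chernoff–Stein lemma, converse direction.) Let P and Q be probability mass functions on a common finite alphabet 𝒜 with Q(a) > 0 for every a ∈ 𝒜, and fix ε ∈ (0,1). For each n, let β_ε^n = min { Q^{⊗n}(A) : A ⊆ 𝒜^n, P^{⊗n}(A) ≥ 1 − ε }, where P^{⊗n} and Q^{⊗n} are the n-fold product distributions on 𝒜^n. Then liminf_{n→∞} (1/n)·log β_ε^n ≥ −D_KL(P‖Q). -/
/-!
Let `ℓ = log (P / Q)`, so that `D = ∑ P ℓ` and `V = ∑ P (ℓ - D)²` are the mean and variance of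
`ℓ` under `P`. Under `P^⊗n` the sum `∑ ℓ (xᵢ)` has mean `n D` and variance `n V`, so by Chebyshev
it exceeds `n (D + δ)` with probability at most `V / (n δ²)`. Off that event
`Q^⊗n(x) ≥ e^{-n(D+δ)} P^⊗n(x)`, hence every `A` with `P^⊗n(A) ≥ 1 - ε` has
`Q^⊗n(A) ≥ e^{-n(D+δ)} (1 - ε - V / (n δ²))`, which is at least `e^{-n(D+δ)} (1 - ε) / 2` for
large `n`. Taking logarithms and letting `δ → 0` gives the bound.
-/

open Finset Real Filter

theorem sum_prod_mul_sum_sq_of_sum_mul_eq_zero {α : Type*} [Fintype α] (P g : α → ℝ)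
    (hP : ∑ a, P a = 1) (hg : ∑ a, P a * g a = 0) (n : ℕ) :
    ∑ x : Fin n → α, (∏ i, P (x i)) * (∑ i, g (x i)) ^ 2 = n * ∑ a, P a * g a ^ 2 := by
  induction n with
  | zero => simp
  | succ n ih =>
    have hmass : ∑ y : Fin n → α, ∏ i, P (y i) = 1 := by rw [← Fintype.sum_pow, hP, one_pow]
    rw [← (Fin.consEquiv fun _ => α).sum_comp, Fintype.sum_prod_type]
    simp only [Fin.consEquiv_apply, Fin.prod_univ_succ, Fin.sum_univ_succ, Fin.cons_zero,
      Fin.cons_succ]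
    calc _ = ∑ a, ∑ y : Fin n → α, (P a * g a ^ 2 * ∏ i, P (y i) +
          2 * (P a * g a) * ((∏ i, P (y i)) * ∑ i, g (y i)) +
          P a * ((∏ i, P (y i)) * (∑ i, g (y i)) ^ 2)) := by
          refine sum_congr rfl fun a _ => sum_congr rfl fun y _ => by ring
      _ = _ := by
          simp only [sum_add_distrib, ← mul_sum, ← sum_mul, hmass, hg, ih, hP]
          push_cast; ring

theorem sum_filter_lt_le_sum_mul_sq_div {ι : Type*} (s : Finset ι) (w f : ι → ℝ)
    (hw : ∀ x ∈ s, 0 ≤ w x) {t : ℝ} (ht : 0 < t) :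
    ∑ x ∈ s with t < f x, w x ≤ (∑ x ∈ s, w x * f x ^ 2) / t ^ 2 := by
  rw [le_div_iff₀ (by positivity), sum_mul]
  calc ∑ x ∈ s with t < f x, w x * t ^ 2
      ≤ ∑ x ∈ s with t < f x, w x * f x ^ 2 := by
        refine sum_le_sum fun x hx => ?_
        obtain ⟨hxs, htx⟩ := mem_filter.1 hx
        exact mul_le_mul_of_nonneg_left (pow_le_pow_left₀ ht.le htx.le 2) (hw x hxs)
    _ ≤ ∑ x ∈ s, w x * f x ^ 2 :=
        sum_le_sum_of_subset_of_nonneg (filter_subset _ _) fun x hx _ =>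
          mul_nonneg (hw x hx) (sq_nonneg _)

theorem mul_sum_le_sum_add_mul_sum_filter_not {ι : Type*} (s : Finset ι) (p q : ι → ℝ)
    (T : ι → Prop) [DecidablePred T] {c : ℝ} (hq : ∀ x ∈ s, 0 ≤ q x)
    (hT : ∀ x ∈ s, T x → c * p x ≤ q x) :
    c * ∑ x ∈ s, p x ≤ ∑ x ∈ s, q x + c * ∑ x ∈ s with ¬T x, p x := by
  rw [← sum_filter_add_sum_filter_not s T p, mul_add]
  gcongr
  calc c * ∑ x ∈ s with T x, p x = ∑ x ∈ s with T x, c * p x := mul_sum _ _ _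
    _ ≤ ∑ x ∈ s with T x, q x := sum_le_sum fun x hx => (mem_filter.1 hx).elim (hT x)
    _ ≤ ∑ x ∈ s, q x :=
        sum_le_sum_of_subset_of_nonneg (filter_subset _ _) fun x hx _ => hq x hx

theorem Real.exp_neg_log_div_mul_le {p q : ℝ} (hp : 0 ≤ p) (hq : 0 < q) :
    exp (-log (p / q)) * p ≤ q := by
  rcases hp.eq_or_lt with rfl | hp
  · simpa using hq.le
  · rw [exp_neg, exp_log (by positivity), inv_div, div_mul_cancel₀ _ hp.ne']

theorem exp_neg_mul_prod_le_prod {ι : Type*} (s : Finset ι) {p q : ι → ℝ}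
    (hp : ∀ i ∈ s, 0 ≤ p i) (hq : ∀ i ∈ s, 0 < q i) {t : ℝ}
    (ht : ∑ i ∈ s, log (p i / q i) ≤ t) :
    exp (-t) * ∏ i ∈ s, p i ≤ ∏ i ∈ s, q i :=
  calc exp (-t) * ∏ i ∈ s, p i ≤ exp (-∑ i ∈ s, log (p i / q i)) * ∏ i ∈ s, p i := by
        gcongr
        exact prod_nonneg hp
    _ = ∏ i ∈ s, exp (-log (p i / q i)) * p i := by
        rw [← sum_neg_distrib, exp_sum, prod_mul_distrib]
    _ ≤ ∏ i ∈ s, q i := prod_le_prod (fun i hi => mul_nonneg (exp_pos _).le (hp i hi))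
        fun i hi => exp_neg_log_div_mul_le (hp i hi) (hq i hi)

noncomputable def neymanPearsonBeta {ι : Type*} (p q : ι → ℝ) (r : ℝ) : ℝ :=
  sInf {b : ℝ | ∃ A : Finset ι, r ≤ ∑ x ∈ A, p x ∧ b = ∑ x ∈ A, q x}

section NeymanPearson

variable {ι : Type*} [Fintype ι] {p q : ι → ℝ} {r : ℝ}

theorem neymanPearsonBeta_le_sum (hr : r ≤ ∑ x, p x) (hq : ∀ x, 0 ≤ q x) :
    neymanPearsonBeta p q r ≤ ∑ x, q x :=
  csInf_le ⟨0, by rintro b ⟨A, -, rfl⟩; exact sum_nonneg fun x _ => hq x⟩ ⟨univ, hr, rfl⟩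

theorem le_neymanPearsonBeta (hr : r ≤ ∑ x, p x) {L : ℝ}
    (h : ∀ A : Finset ι, r ≤ ∑ x ∈ A, p x → L ≤ ∑ x ∈ A, q x) :
    L ≤ neymanPearsonBeta p q r :=
  le_csInf ⟨_, univ, hr, rfl⟩ (by rintro b ⟨A, hA, rfl⟩; exact h A hA)

end NeymanPearson

theorem le_liminf_log_div_of_exp_bounds {β : ℕ → ℝ} {a C : ℝ} (hup : ∀ n, β n ≤ C ^ n)
    (hlow : ∀ δ > 0, ∃ c > 0, ∀ᶠ n : ℕ in atTop, c * exp (-(n * (a + δ))) ≤ β n) :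
    -a ≤ liminf (fun n : ℕ => 1 / (n : ℝ) * log (β n)) atTop := by
  have hpos : ∀ᶠ n : ℕ in atTop, 0 < β n := by
    obtain ⟨c, hc, h⟩ := hlow 1 one_pos
    filter_upwards [h] with n hn using lt_of_lt_of_le (by positivity) hn
  have hcob : IsCoboundedUnder (· ≥ ·) atTop fun n : ℕ => 1 / (n : ℝ) * log (β n) := by
    refine isCoboundedUnder_ge_of_eventually_le atTop (x := log C) ?_
    filter_upwards [hpos, eventually_gt_atTop 0] with n hβ hn
    rw [one_div_mul_eq_div, div_le_iff₀' (by positivity), ← log_pow]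
    exact log_le_log hβ (hup n)
  refine le_of_forall_pos_le_add fun δ hδ => ?_
  obtain ⟨c, hc, hlow⟩ := hlow (δ / 2) (by positivity)
  have hsmall : ∀ᶠ n : ℕ in atTop, -(δ / 2) < log c / n :=
    (tendsto_const_div_atTop_nhds_zero_nat (log c)).eventually (lt_mem_nhds (by linarith))
  have : ∀ᶠ n : ℕ in atTop, -a - δ ≤ 1 / (n : ℝ) * log (β n) := by
    filter_upwards [hlow, hsmall, eventually_gt_atTop 0] with n hβ hcn hn
    have hlog : log c - n * (a + δ / 2) ≤ log (β n) := by
      simpa [log_mul hc.ne', log_exp] using log_le_log (by positivity) hβ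
    rw [one_div_mul_eq_div, le_div_iff₀ (by positivity)]
    rw [lt_div_iff₀ (by positivity)] at hcn
    nlinarith
  linarith [le_liminf_of_le hcob this]

section Stein

variable {α : Type*} [Fintype α] {P Q : α → ℝ}

theorem exp_neg_mul_sub_variance_le_sum_prod (hP_nonneg : ∀ a, 0 ≤ P a)
    (hP_sum : ∑ a, P a = 1) (hQ_pos : ∀ a, 0 < Q a) {D : ℝ}
    (hD : ∑ a, P a * log (P a / Q a) = D) {n : ℕ} (hn : 0 < n) {δ : ℝ} (hδ : 0 < δ)
    (A : Finset (Fin n → α)) :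
    exp (-(n * (D + δ))) *
        (∑ x ∈ A, ∏ i, P (x i) - (∑ a, P a * (log (P a / Q a) - D) ^ 2) / (n * δ ^ 2)) ≤
      ∑ x ∈ A, ∏ i, Q (x i) := by
  set g : α → ℝ := fun a => log (P a / Q a) - D
  have hPn : ∀ x : Fin n → α, 0 ≤ ∏ i, P (x i) := fun x => prod_nonneg fun i _ => hP_nonneg _
  have hg_mean : ∑ a, P a * g a = 0 := by
    simp only [g, mul_sub, sum_sub_distrib, ← sum_mul, hP_sum, one_mul, hD, sub_self]
  have hsum_log (x : Fin n → α) : ∑ i, log (P (x i) / Q (x i)) = ∑ i, g (x i) + n * D := by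
    simp [g, sum_sub_distrib]
  have hchange := mul_sum_le_sum_add_mul_sum_filter_not A (fun x => ∏ i, P (x i))
    (fun x => ∏ i, Q (x i)) (fun x => ∑ i, g (x i) ≤ n * δ)
    (c := exp (-(n * (D + δ)))) (fun x _ => prod_nonneg fun i _ => (hQ_pos _).le)
    fun x _ hx => exp_neg_mul_prod_le_prod univ (fun i _ => hP_nonneg _) (fun i _ => hQ_pos _)
      (by rw [hsum_log]; nlinarith)
  have hbad : ∑ x ∈ A with ¬∑ i, g (x i) ≤ n * δ, ∏ i, P (x i) ≤
      (∑ a, P a * g a ^ 2) / (n * δ ^ 2) := by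
    calc _ ≤ ∑ x : Fin n → α with n * δ < ∑ i, g (x i), ∏ i, P (x i) := by
          simp only [not_le]
          exact sum_le_sum_of_subset_of_nonneg (filter_subset_filter _ (subset_univ A))
            fun x _ _ => hPn x
      _ ≤ (∑ x : Fin n → α, (∏ i, P (x i)) * (∑ i, g (x i)) ^ 2) / (n * δ) ^ 2 :=
          sum_filter_lt_le_sum_mul_sq_div _ _ _ (fun x _ => hPn x) (by positivity)
      _ = _ := by
          rw [sum_prod_mul_sum_sq_of_sum_mul_eq_zero P g hP_sum hg_mean]
          field_simp
  have hE := exp_pos (-(n * (D + δ)))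
  nlinarith

end Stein

theorem stein_converse_general
    {α : Type*} [Fintype α]
    (P Q : α → ℝ)
    (hP_nonneg : ∀ a, 0 ≤ P a) (hP_sum : ∑ a, P a = 1)
    (hQ_pos : ∀ a, 0 < Q a)
    (ε : ℝ) (hε : ε ∈ Set.Ioo (0 : ℝ) 1)
    (β : ℕ → ℝ)
    (hβ : ∀ n, β n = sInf { b : ℝ | ∃ A : Finset (Fin n → α),
        1 - ε ≤ ∑ x ∈ A, ∏ i, P (x i) ∧ b = ∑ x ∈ A, ∏ i, Q (x i) }) :
    -(∑ a ∈ Finset.univ.filter (fun a => 0 < P a), P a * Real.log (P a / Q a)) ≤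
      Filter.liminf (fun n : ℕ => (1 / (n : ℝ)) * Real.log (β n)) Filter.atTop := by
  rw [sum_filter_of_ne fun a _ h => (hP_nonneg a).lt_of_ne fun h0 => h (by rw [← h0, zero_mul])]
  set D := ∑ a, P a * log (P a / Q a) with hD
  have hmass (n : ℕ) : 1 - ε ≤ ∑ x : Fin n → α, ∏ i, P (x i) := by
    rw [← Fintype.sum_pow, hP_sum, one_pow]
    linarith [hε.1]
  refine le_liminf_log_div_of_exp_bounds (C := ∑ a, Q a) (fun n => ?_)
    fun δ hδ => ⟨(1 - ε) / 2, by linarith [hε.2], ?_⟩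
  · rw [hβ, Fintype.sum_pow]
    exact neymanPearsonBeta_le_sum (hmass n) fun x => prod_nonneg fun i _ => (hQ_pos _).le
  · set V := ∑ a, P a * (log (P a / Q a) - D) ^ 2
    have hV : ∀ᶠ n : ℕ in atTop, V / (n * δ ^ 2) ≤ (1 - ε) / 2 := by
      filter_upwards [(tendsto_const_div_atTop_nhds_zero_nat (V / δ ^ 2)).eventually
        (ge_mem_nhds (show (0 : ℝ) < (1 - ε) / 2 by linarith [hε.2]))] with n hn
      rwa [div_div, mul_comm] at hn
    filter_upwards [eventually_gt_atTop 0, hV] with n hn hVn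
    rw [hβ, mul_comm]
    refine le_neymanPearsonBeta (hmass n) fun A hA => le_trans ?_
      (exp_neg_mul_sub_variance_le_sum_prod hP_nonneg hP_sum hQ_pos hD.symm hn hδ A)
    gcongr
    linarith

/-- **Chernoff–Stein lemma, converse direction.**  For probability mass functions `P`, `Q`
on a finite alphabet `α` with `Q` everywhere positive and `ε ∈ (0,1)`, let
`β n = min { Q^⊗n(A) : A ⊆ αⁿ, P^⊗n(A) ≥ 1 − ε }` be the Neyman–Pearson error of the optimal
test on `n` i.i.d. samples.  Then `liminf (1/n) log (β n) ≥ −D_KL(P‖Q)`. -/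
theorem stein_converse
    {α : Type*} [Fintype α] [Nonempty α] [DecidableEq α]
    (P Q : α → ℝ)
    (hP_nonneg : ∀ a, 0 ≤ P a) (hP_sum : ∑ a, P a = 1)
    (hQ_pos : ∀ a, 0 < Q a) (hQ_sum : ∑ a, Q a = 1)
    (ε : ℝ) (hε : ε ∈ Set.Ioo (0 : ℝ) 1)
    (β : ℕ → ℝ)
    (hβ : ∀ n, β n = sInf { b : ℝ | ∃ A : Finset (Fin n → α),
        1 - ε ≤ ∑ x ∈ A, ∏ i, P (x i) ∧ b = ∑ x ∈ A, ∏ i, Q (x i) }) :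
    -(∑ a ∈ Finset.univ.filter (fun a => 0 < P a), P a * Real.log (P a / Q a)) ≤
      Filter.liminf (fun n : ℕ => (1 / (n : ℝ)) * Real.log (β n)) Filter.atTop :=
  stein_converse_general P Q hP_nonneg hP_sum hQ_pos ε hε β hβ
end

section
/- (Error exponent for detecting a given language model in terms of cross-entropy.) Let P (the distribution of authentic text tokens) and Q (the distribution of language-model-generated tokens) be probability mass functions on a common finite alphabet 𝒜 with Q(a) > 0 for every a ∈ 𝒜, and fix ε ∈ (0,1). For each n, let β_ε^n = min { Q^{⊗n}(A) : A ⊆ 𝒜^n, P^{⊗n}(A) ≥ 1 − ε }. Then lim_{n→∞} −(1/n)·log β_ε^n = H(P,Q) − H(P); that is, the Neyman–Pearson error exponent of the hypothesis test between authentic and generated text equals the cross-entropy of the language model minus the entropy of the language. -/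
/-!
The log-likelihood ratio `log (Pⁿ(x) / Qⁿ(x))` of an i.i.d. sample is a sum of `n` independent
copies of `log (P a / Q a)`, whose mean is the relative entropy `D(P‖Q) = H(P,Q) - H(P)`.
By Chebyshev's inequality it lies within `nδ` of `n D(P‖Q)` outside a set of `Pⁿ`-mass
`O(1/n)`. On this typical set `Qⁿ(x) = e^{-n(D(P‖Q) ± δ)} Pⁿ(x)`: taking the typical set as
acceptance region shows `βₙ ≤ e^{-n(D(P‖Q) - δ)}`, and every region of `Pⁿ`-mass `1 - ε` meets the
typical set in `Pⁿ`-mass at least `(1 - ε)/2`, whence `βₙ ≥ e^{-n(D(P‖Q) + δ)}` eventually.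
-/

open Filter Finset Real Topology

lemma sum_le_sum_mul_sq_div_sq {ι : Type*} [Fintype ι] {s : Finset ι} {w f : ι → ℝ} {t : ℝ}
    (ht : 0 < t) (hw : ∀ x, 0 ≤ w x) (h : ∀ x ∈ s, 0 < w x → t ≤ |f x|) :
    ∑ x ∈ s, w x ≤ (∑ x, w x * f x ^ 2) / t ^ 2 := by
  rw [le_div_iff₀ (by positivity), sum_mul]
  calc ∑ x ∈ s, w x * t ^ 2 ≤ ∑ x ∈ s, w x * f x ^ 2 := by
        refine sum_le_sum fun x hx => ?_
        rcases (hw x).eq_or_lt with hx0 | hx0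
        · simp [← hx0]
        · rw [← sq_abs (f x)]
          exact mul_le_mul_of_nonneg_left (pow_le_pow_left₀ ht.le (h x hx hx0) 2) hx0.le
    _ ≤ ∑ x, w x * f x ^ 2 := sum_le_univ_sum_of_nonneg fun x => mul_nonneg (hw x) (sq_nonneg _)

lemma exp_neg_add_mul_le_and_le_exp_neg_sub_mul {p q s t : ℝ} (hp : 0 < p) (hq : 0 < q)
    (h : |log p - log q - s| ≤ t) :
    exp (-(s + t)) * p ≤ q ∧ q ≤ exp (-(s - t)) * p := by
  obtain ⟨h₁, h₂⟩ := abs_le.mp h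
  rw [← exp_log hp, ← exp_add, ← exp_add]
  constructor
  · rw [← le_log_iff_exp_le hq]; linarith
  · rw [← log_le_iff_le_exp hq]; linarith

lemma tendsto_neg_inv_mul_log_of_exp_bounds {u : ℕ → ℝ} {D : ℝ}
    (hle : ∀ δ > 0, ∀ᶠ n : ℕ in atTop, u n ≤ exp (-(n * (D - δ))))
    (hge : ∀ δ > 0, ∀ᶠ n : ℕ in atTop, exp (-(n * (D + δ))) ≤ u n) :
    Tendsto (fun n : ℕ => -(1 / (n : ℝ)) * log (u n)) atTop (𝓝 D) := by
  rw [Metric.tendsto_nhds]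
  intro r hr
  filter_upwards [hle (r / 2) (by positivity), hge (r / 2) (by positivity),
    eventually_gt_atTop 0] with n hup hlow hn
  have hn' : (0 : ℝ) < n := by exact_mod_cast hn
  have hu : 0 < u n := (exp_pos _).trans_le hlow
  have h₁ := (log_le_iff_le_exp hu).2 hup
  have h₂ := (le_log_iff_exp_le hu).2 hlow
  have he : (n : ℝ) * (-(1 / (n : ℝ)) * log (u n)) = -log (u n) := by field_simp
  rw [Real.dist_eq, abs_lt]
  constructor <;> nlinarith

section IID

variable {α : Type*} [Fintype α] {P Q : α → ℝ}

lemma sum_prod_eq_one (hP : ∑ a, P a = 1) (n : ℕ) : ∑ x : Fin n → α, ∏ i, P (x i) = 1 := by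
  rw [← Fintype.sum_pow, hP, one_pow]

lemma sum_prod_le_one (hP₀ : ∀ a, 0 ≤ P a) (hP : ∑ a, P a = 1) {n : ℕ}
    (A : Finset (Fin n → α)) : ∑ x ∈ A, ∏ i, P (x i) ≤ 1 :=
  (sum_le_univ_sum_of_nonneg fun x => prod_nonneg fun i _ => hP₀ (x i)).trans_eq
    (sum_prod_eq_one hP n)

lemma sum_prod_mul_sum_sq {g : α → ℝ} (hP : ∑ a, P a = 1) (hg : ∑ a, P a * g a = 0) (n : ℕ) :
    ∑ x : Fin n → α, (∏ i, P (x i)) * (∑ i, g (x i)) ^ 2 = n * ∑ a, P a * g a ^ 2 := by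
  induction n with
  | zero => simp
  | succ n ih =>
    rw [← (Fin.consEquiv fun _ => α).sum_comp, Fintype.sum_prod_type]
    simp only [Fin.consEquiv_apply, Fin.prod_univ_succ, Fin.sum_univ_succ, Fin.cons_zero,
      Fin.cons_succ]
    have hexpand : ∀ a (y : Fin n → α), P a * (∏ i, P (y i)) * (g a + ∑ i, g (y i)) ^ 2 =
        P a * g a ^ 2 * ∏ i, P (y i) + 2 * (P a * g a) * ((∏ i, P (y i)) * ∑ i, g (y i)) +
          P a * ((∏ i, P (y i)) * (∑ i, g (y i)) ^ 2) := fun a y => by ring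
    simp only [hexpand, sum_add_distrib, ← mul_sum, ← sum_mul, sum_prod_eq_one hP, ih, hg, hP]
    push_cast
    ring

noncomputable def relEntropy (P Q : α → ℝ) : ℝ := ∑ a, P a * (log (P a) - log (Q a))

open Classical in
/-- Defined by the likelihood-ratio bounds themselves, not by `|log Pⁿ - log Qⁿ - n D| ≤ n δ`:
this excludes the points with `Pⁿ(x) = 0`, where `log` takes junk values. -/
noncomputable def typicalSet (P Q : α → ℝ) (n : ℕ) (δ : ℝ) : Finset (Fin n → α) :=
  {x | exp (-(n * (relEntropy P Q + δ))) * ∏ i, P (x i) ≤ ∏ i, Q (x i) ∧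
    ∏ i, Q (x i) ≤ exp (-(n * (relEntropy P Q - δ))) * ∏ i, P (x i)}

lemma mem_typicalSet {n : ℕ} {δ : ℝ} {x : Fin n → α} :
    x ∈ typicalSet P Q n δ ↔ exp (-(n * (relEntropy P Q + δ))) * ∏ i, P (x i) ≤ ∏ i, Q (x i) ∧
      ∏ i, Q (x i) ≤ exp (-(n * (relEntropy P Q - δ))) * ∏ i, P (x i) := by
  simp [typicalSet]

lemma mem_typicalSet_of_abs_sum_le (hQ : ∀ a, 0 < Q a) {n : ℕ} {δ : ℝ} {x : Fin n → α}
    (hx : 0 < ∏ i, P (x i))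
    (h : |∑ i, (log (P (x i)) - log (Q (x i)) - relEntropy P Q)| ≤ n * δ) :
    x ∈ typicalSet P Q n δ := by
  have hlog : log (∏ i, P (x i)) - log (∏ i, Q (x i)) - n * relEntropy P Q =
      ∑ i, (log (P (x i)) - log (Q (x i)) - relEntropy P Q) := by
    rw [log_prod fun i _ => (prod_ne_zero_iff.1 hx.ne' i (mem_univ i)),
      log_prod fun i _ => (hQ (x i)).ne', ← sum_sub_distrib, sum_sub_distrib]
    simp
  rw [mem_typicalSet, mul_add, mul_sub]
  exact exp_neg_add_mul_le_and_le_exp_neg_sub_mul hx (prod_pos fun i _ => hQ (x i)) (hlog ▸ h)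

lemma sum_prod_compl_typicalSet_le [DecidableEq α] (hP₀ : ∀ a, 0 ≤ P a) (hP : ∑ a, P a = 1)
    (hQ : ∀ a, 0 < Q a) {n : ℕ} (hn : 0 < n) {δ : ℝ} (hδ : 0 < δ) :
    ∑ x ∈ (typicalSet P Q n δ)ᶜ, ∏ i, P (x i) ≤
      (∑ a, P a * (log (P a) - log (Q a) - relEntropy P Q) ^ 2) / δ ^ 2 / n := by
  set g : α → ℝ := fun a => log (P a) - log (Q a) - relEntropy P Q
  have hg : ∑ a, P a * g a = 0 := by
    simp only [g, mul_sub, sum_sub_distrib, ← sum_mul, hP, one_mul, relEntropy, sub_self]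
  have hn' : (0 : ℝ) < n := by exact_mod_cast hn
  calc ∑ x ∈ (typicalSet P Q n δ)ᶜ, ∏ i, P (x i)
      ≤ (∑ x : Fin n → α, (∏ i, P (x i)) * (∑ i, g (x i)) ^ 2) / (n * δ) ^ 2 :=
        sum_le_sum_mul_sq_div_sq (by positivity) (fun x => prod_nonneg fun i _ => hP₀ (x i))
          fun x hx hpos => le_of_not_ge fun hlt =>
            mem_compl.1 hx (mem_typicalSet_of_abs_sum_le hQ hpos hlt)
    _ = (∑ a, P a * g a ^ 2) / δ ^ 2 / n := by
        rw [sum_prod_mul_sum_sq hP hg]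
        field_simp

lemma tendsto_sum_prod_typicalSet (hP₀ : ∀ a, 0 ≤ P a) (hP : ∑ a, P a = 1)
    (hQ : ∀ a, 0 < Q a) {δ : ℝ} (hδ : 0 < δ) :
    Tendsto (fun n => ∑ x ∈ typicalSet P Q n δ, ∏ i, P (x i)) atTop (𝓝 1) := by
  classical
  set V := ∑ a, P a * (log (P a) - log (Q a) - relEntropy P Q) ^ 2
  have hlow : ∀ᶠ n in atTop, 1 - V / δ ^ 2 / n ≤ ∑ x ∈ typicalSet P Q n δ, ∏ i, P (x i) := by
    filter_upwards [eventually_gt_atTop 0] with n hn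
    have hsplit := sum_compl_add_sum (typicalSet P Q n δ) fun x => ∏ i, P (x i)
    rw [sum_prod_eq_one hP] at hsplit
    linarith [sum_prod_compl_typicalSet_le hP₀ hP hQ hn hδ]
  have hV : Tendsto (fun n : ℕ => 1 - V / δ ^ 2 / n) atTop (𝓝 1) := by
    simpa using (tendsto_const_div_atTop_nhds_zero_nat (V / δ ^ 2)).const_sub 1
  exact tendsto_of_tendsto_of_tendsto_of_le_of_le' hV tendsto_const_nhds hlow
    (Eventually.of_forall fun n => sum_prod_le_one hP₀ hP _)

def typeIIErrors (P Q : α → ℝ) (ε : ℝ) (n : ℕ) : Set ℝ :=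
  {b | ∃ A : Finset (Fin n → α), 1 - ε ≤ ∑ x ∈ A, ∏ i, P (x i) ∧ b = ∑ x ∈ A, ∏ i, Q (x i)}

lemma eventually_sInf_typeIIErrors_le (hP₀ : ∀ a, 0 ≤ P a) (hP : ∑ a, P a = 1)
    (hQ : ∀ a, 0 < Q a) {ε : ℝ} (hε : 0 < ε) {δ : ℝ} (hδ : 0 < δ) :
    ∀ᶠ n : ℕ in atTop, sInf (typeIIErrors P Q ε n) ≤ exp (-(n * (relEntropy P Q - δ))) := by
  filter_upwards [(tendsto_order.1 (tendsto_sum_prod_typicalSet hP₀ hP hQ hδ)).1 (1 - ε)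
    (by linarith)] with n hT
  have hbdd : BddBelow (typeIIErrors P Q ε n) := ⟨0, by
    rintro _ ⟨A, -, rfl⟩
    exact sum_nonneg fun x _ => (prod_pos fun i _ => hQ (x i)).le⟩
  calc sInf (typeIIErrors P Q ε n) ≤ ∑ x ∈ typicalSet P Q n δ, ∏ i, Q (x i) :=
        csInf_le hbdd ⟨_, hT.le, rfl⟩
    _ ≤ ∑ x ∈ typicalSet P Q n δ, exp (-(n * (relEntropy P Q - δ))) * ∏ i, P (x i) :=
        sum_le_sum fun x hx => (mem_typicalSet.1 hx).2
    _ ≤ exp (-(n * (relEntropy P Q - δ))) := by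
        rw [← mul_sum]
        exact mul_le_of_le_one_right (exp_pos _).le (sum_prod_le_one hP₀ hP _)

lemma eventually_exp_le_sInf_typeIIErrors (hP₀ : ∀ a, 0 ≤ P a) (hP : ∑ a, P a = 1)
    (hQ : ∀ a, 0 < Q a) {ε : ℝ} (hε₀ : 0 ≤ ε) (hε₁ : ε < 1) {δ : ℝ} (hδ : 0 < δ) :
    ∀ᶠ n : ℕ in atTop, exp (-(n * (relEntropy P Q + δ))) ≤ sInf (typeIIErrors P Q ε n) := by
  classical
  set c := (1 - ε) / 2 with hc_def
  have hc : 0 < c := by linarith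
  have hdecay : Tendsto (fun n : ℕ => exp (-(n * (δ / 2)))) atTop (𝓝 0) :=
    tendsto_exp_neg_atTop_nhds_zero.comp
      (tendsto_natCast_atTop_atTop.atTop_mul_const (half_pos hδ))
  filter_upwards [(tendsto_order.1 (tendsto_sum_prod_typicalSet hP₀ hP hQ (half_pos hδ))).1
    (1 - c) (by linarith), (tendsto_order.1 hdecay).2 c hc] with n hT hexp
  refine le_csInf ⟨_, univ, by rw [sum_prod_eq_one hP]; linarith, rfl⟩ ?_
  rintro _ ⟨A, hA, rfl⟩
  set T := typicalSet P Q n (δ / 2)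
  have hAT : c ≤ ∑ x ∈ A ∩ T, ∏ i, P (x i) := by
    have := sum_union_inter (s₁ := A) (s₂ := T) (f := fun x => ∏ i, P (x i))
    linarith [sum_prod_le_one hP₀ hP (A ∪ T)]
  calc exp (-(n * (relEntropy P Q + δ)))
      = exp (-(n * (relEntropy P Q + δ / 2))) * exp (-(n * (δ / 2))) := by
        rw [← exp_add]; ring_nf
    _ ≤ exp (-(n * (relEntropy P Q + δ / 2))) * ∑ x ∈ A ∩ T, ∏ i, P (x i) := by
        gcongr
        exact hexp.le.trans hAT
    _ = ∑ x ∈ A ∩ T, exp (-(n * (relEntropy P Q + δ / 2))) * ∏ i, P (x i) := mul_sum _ _ _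
    _ ≤ ∑ x ∈ A ∩ T, ∏ i, Q (x i) :=
        sum_le_sum fun x hx => (mem_typicalSet.1 (mem_inter.1 hx).2).1
    _ ≤ ∑ x ∈ A, ∏ i, Q (x i) := sum_le_sum_of_subset_of_nonneg inter_subset_left
        fun x _ _ => (prod_pos fun i _ => hQ (x i)).le

end IID

theorem error_exponent_eq_cross_entropy_sub_entropy_general
    {α : Type*} [Fintype α]
    (P Q : α → ℝ)
    (hP_nonneg : ∀ a, 0 ≤ P a) (hP_sum : ∑ a, P a = 1)
    (hQ_pos : ∀ a, 0 < Q a)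
    (ε : ℝ) (hε : ε ∈ Set.Ioo (0 : ℝ) 1)
    (β : ℕ → ℝ)
    (hβ : ∀ n, β n = sInf { b : ℝ | ∃ A : Finset (Fin n → α),
        1 - ε ≤ ∑ x ∈ A, ∏ i, P (x i) ∧ b = ∑ x ∈ A, ∏ i, Q (x i) }) :
    Filter.Tendsto (fun n : ℕ => -(1 / (n : ℝ)) * Real.log (β n)) Filter.atTop
      (nhds ((-∑ a, P a * Real.log (Q a)) - (-∑ a, P a * Real.log (P a)))) := by
  have hD : (-∑ a, P a * log (Q a)) - (-∑ a, P a * log (P a)) = relEntropy P Q := by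
    simp only [relEntropy, mul_sub, sum_sub_distrib]
    ring
  have hβ' : β = fun n => sInf (typeIIErrors P Q ε n) := funext hβ
  rw [hD, hβ']
  exact tendsto_neg_inv_mul_log_of_exp_bounds
    (fun δ hδ => eventually_sInf_typeIIErrors_le hP_nonneg hP_sum hQ_pos hε.1 hδ)
    (fun δ hδ => eventually_exp_le_sInf_typeIIErrors hP_nonneg hP_sum hQ_pos hε.1.le hε.2 hδ)

/-- **Error exponent for detecting a given language model, in terms of cross-entropy.**
Let `P` (authentic text) and `Q` (language-model output) be probability mass functions on a
finite alphabet `α` with `Q` everywhere positive, and let `ε ∈ (0,1)`.  With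
`β n = min { Q^⊗n(A) : A ⊆ αⁿ, P^⊗n(A) ≥ 1 − ε }` the optimal Neyman–Pearson error on `n`
i.i.d. tokens, the error exponent satisfies
`lim (−(1/n) log (β n)) = H(P,Q) − H(P)`, the cross-entropy minus the entropy. -/
theorem error_exponent_eq_cross_entropy_sub_entropy
    {α : Type*} [Fintype α] [Nonempty α] [DecidableEq α]
    (P Q : α → ℝ)
    (hP_nonneg : ∀ a, 0 ≤ P a) (hP_sum : ∑ a, P a = 1)
    (hQ_pos : ∀ a, 0 < Q a) (hQ_sum : ∑ a, Q a = 1)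
    (ε : ℝ) (hε : ε ∈ Set.Ioo (0 : ℝ) 1)
    (β : ℕ → ℝ)
    (hβ : ∀ n, β n = sInf { b : ℝ | ∃ A : Finset (Fin n → α),
        1 - ε ≤ ∑ x ∈ A, ∏ i, P (x i) ∧ b = ∑ x ∈ A, ∏ i, Q (x i) }) :
    Filter.Tendsto (fun n : ℕ => -(1 / (n : ℝ)) * Real.log (β n)) Filter.atTop
      (nhds ((-∑ a, P a * Real.log (Q a)) - (-∑ a, P a * Real.log (P a)))) :=
  error_exponent_eq_cross_entropy_sub_entropy_general P Q hP_nonneg hP_sum hQ_pos ε hε β hβ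
end

section
/- (Chernoff bound on Bayesian error.) Let P and Q be probability mass functions on a common finite alphabet 𝒜, both everywhere positive, with equal prior probabilities 1/2 on the two hypotheses. For each n, the minimal Bayesian probability of error P_e^{(n)} = min_{A ⊆ 𝒜^n} [ (1/2)·P^{⊗n}(𝒜^n \ A) + (1/2)·Q^{⊗n}(A) ] satisfies P_e^{(n)} ≤ exp(−n·C(P,Q)), where C(P,Q) = sup_{0 ≤ λ ≤ 1} ( −log ∑_{a∈𝒜} P(a)^λ · Q(a)^{1−λ} ) is the Chernoff information between P and Q. -/
/-!
For every `λ ∈ [0, 1]` and `p, q ≥ 0` one has `min p q ≤ p ^ λ * q ^ (1 - λ)`. The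
likelihood-ratio test accepts `H₀` exactly where `Q^⊗n ≤ P^⊗n`, so its error is
`(1/2) ∑ₓ min (P^⊗n x) (Q^⊗n x)`, hence at most `(1/2) ∑ₓ (P^⊗n x) ^ λ (Q^⊗n x) ^ (1 - λ)`.
This sum factorises over the coordinates into `(∑ₐ P a ^ λ Q a ^ (1 - λ)) ^ n`, and since the
supremum defining `C(P, Q)` is attained on the compact interval `[0, 1]`, choosing the maximiser
`λ` turns the bound into `exp (-n C(P, Q))`.
-/

open Finset Real

noncomputable def chernoffCoeff {β : Type*} [Fintype β] (p q : β → ℝ) (l : ℝ) : ℝ :=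
  ∑ x, p x ^ l * q x ^ (1 - l)

lemma min_le_rpow_mul_rpow {a b l : ℝ} (ha : 0 ≤ a) (hb : 0 ≤ b) (hl : l ∈ Set.Icc (0 : ℝ) 1) :
    min a b ≤ a ^ l * b ^ (1 - l) :=
  calc min a b = min a b ^ l * min a b ^ (1 - l) := by
        rw [← rpow_add' (le_min ha hb) (by norm_num), add_sub_cancel, rpow_one]
    _ ≤ a ^ l * b ^ (1 - l) :=
        mul_le_mul (rpow_le_rpow (le_min ha hb) (min_le_left a b) hl.1)
          (rpow_le_rpow (le_min ha hb) (min_le_right a b) (sub_nonneg.2 hl.2))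
          (rpow_nonneg (le_min ha hb) _) (rpow_nonneg ha _)

lemma IsCompact.exists_sSup_setOf_eq {X : Type*} [TopologicalSpace X] {s : Set X} {f : X → ℝ}
    (hs : IsCompact s) (hne : s.Nonempty) (hf : ContinuousOn f s) :
    ∃ l ∈ s, sSup {c | ∃ l ∈ s, c = f l} = f l := by
  have himage : {c | ∃ l ∈ s, c = f l} = f '' s := by
    ext c
    exact ⟨fun ⟨l, hl, h⟩ => ⟨l, hl, h.symm⟩, fun ⟨l, hl, h⟩ => ⟨l, hl, h.symm⟩⟩
  obtain ⟨l, hl, h⟩ := (hs.image_of_continuousOn hf).sSup_mem (hne.image f)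
  exact ⟨l, hl, himage ▸ h.symm⟩

section BayesError

variable {β : Type*} [Fintype β]

lemma chernoffCoeff_pos [Nonempty β] {p q : β → ℝ} (hp : ∀ x, 0 < p x) (hq : ∀ x, 0 < q x)
    (l : ℝ) : 0 < chernoffCoeff p q l :=
  sum_pos (fun x _ => mul_pos (rpow_pos_of_pos (hp x) _) (rpow_pos_of_pos (hq x) _))
    univ_nonempty

lemma continuous_chernoffCoeff {p q : β → ℝ} (hp : ∀ x, 0 < p x) (hq : ∀ x, 0 < q x) :
    Continuous (chernoffCoeff p q) := by
  unfold chernoffCoeff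
  fun_prop (disch := intro; simp [(hp _).ne', (hq _).ne'])

lemma sum_min_le_chernoffCoeff {p q : β → ℝ} (hp : ∀ x, 0 ≤ p x) (hq : ∀ x, 0 ≤ q x) {l : ℝ}
    (hl : l ∈ Set.Icc (0 : ℝ) 1) : ∑ x, min (p x) (q x) ≤ chernoffCoeff p q l :=
  sum_le_sum fun x _ => min_le_rpow_mul_rpow (hp x) (hq x) hl

variable [DecidableEq β]

lemma sum_compl_filter_add_sum_filter_eq_sum_min (p q : β → ℝ) :
    ∑ x ∈ (univ.filter fun x => q x ≤ p x)ᶜ, p x + ∑ x ∈ univ.filter (fun x => q x ≤ p x), q x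
      = ∑ x, min (p x) (q x) := by
  rw [compl_filter, ← sum_filter_add_sum_filter_not univ (fun x => q x ≤ p x), add_comm]
  congr 1
  · exact sum_congr rfl fun x hx => (min_eq_right (mem_filter.1 hx).2).symm
  · exact sum_congr rfl fun x hx => (min_eq_left (le_of_not_ge (mem_filter.1 hx).2)).symm

lemma sInf_bayesError_le_half_sum_min {p q : β → ℝ} (hp : ∀ x, 0 ≤ p x) (hq : ∀ x, 0 ≤ q x) :
    sInf {e : ℝ | ∃ A : Finset β, e = (1 / 2) * (∑ x ∈ Aᶜ, p x) + (1 / 2) * (∑ x ∈ A, q x)}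
      ≤ (1 / 2) * ∑ x, min (p x) (q x) := by
  have hbdd : BddBelow
      {e : ℝ | ∃ A : Finset β, e = (1 / 2) * (∑ x ∈ Aᶜ, p x) + (1 / 2) * (∑ x ∈ A, q x)} := by
    refine ⟨0, ?_⟩
    rintro _ ⟨A, rfl⟩
    have := sum_nonneg fun x (_ : x ∈ Aᶜ) => hp x
    have := sum_nonneg fun x (_ : x ∈ A) => hq x
    positivity
  refine (csInf_le hbdd ⟨univ.filter fun x => q x ≤ p x, rfl⟩).trans_eq ?_
  rw [← mul_add, sum_compl_filter_add_sum_filter_eq_sum_min]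

lemma sInf_bayesError_le_half_chernoffCoeff {p q : β → ℝ} (hp : ∀ x, 0 ≤ p x)
    (hq : ∀ x, 0 ≤ q x) {l : ℝ} (hl : l ∈ Set.Icc (0 : ℝ) 1) :
    sInf {e : ℝ | ∃ A : Finset β, e = (1 / 2) * (∑ x ∈ Aᶜ, p x) + (1 / 2) * (∑ x ∈ A, q x)}
      ≤ (1 / 2) * chernoffCoeff p q l :=
  (sInf_bayesError_le_half_sum_min hp hq).trans <| by
    gcongr
    exact sum_min_le_chernoffCoeff hp hq hl

end BayesError

lemma chernoffCoeff_pi {α : Type*} [Fintype α] {P Q : α → ℝ} (hP : ∀ a, 0 ≤ P a)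
    (hQ : ∀ a, 0 ≤ Q a) (l : ℝ) (n : ℕ) :
    chernoffCoeff (fun x : Fin n → α => ∏ i, P (x i)) (fun x => ∏ i, Q (x i)) l
      = chernoffCoeff P Q l ^ n := by
  rw [chernoffCoeff, chernoffCoeff, Fintype.sum_pow]
  refine sum_congr rfl fun x _ => ?_
  rw [prod_mul_distrib, finsetProd_rpow _ _ (fun i _ => hP (x i)),
    finsetProd_rpow _ _ (fun i _ => hQ (x i))]

theorem bayesian_error_le_exp_neg_chernoff_general
    {α : Type*} [Fintype α] [Nonempty α] [DecidableEq α]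
    (P Q : α → ℝ)
    (hP_pos : ∀ a, 0 < P a)
    (hQ_pos : ∀ a, 0 < Q a)
    (C : ℝ)
    (hC : C = sSup { c : ℝ | ∃ l ∈ Set.Icc (0 : ℝ) 1,
        c = -Real.log (∑ a, P a ^ l * Q a ^ (1 - l)) })
    (n : ℕ)
    (Pe : ℝ)
    (hPe : Pe = sInf { e : ℝ | ∃ A : Finset (Fin n → α),
        e = (1 / 2) * (∑ x ∈ Aᶜ, ∏ i, P (x i)) + (1 / 2) * (∑ x ∈ A, ∏ i, Q (x i)) }) :
    Pe ≤ Real.exp (-(n : ℝ) * C) := by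
  have hcont : Continuous fun l => -log (chernoffCoeff P Q l) :=
    ((continuous_chernoffCoeff hP_pos hQ_pos).log
      fun l => (chernoffCoeff_pos hP_pos hQ_pos l).ne').neg
  obtain ⟨l, hl, hsup⟩ :=
    isCompact_Icc.exists_sSup_setOf_eq (Set.nonempty_Icc.2 zero_le_one) hcont.continuousOn
  have hS := chernoffCoeff_pos hP_pos hQ_pos l
  have hexp : Real.exp (-(n : ℝ) * C) = chernoffCoeff P Q l ^ n := by
    rw [hC.trans hsup, neg_mul_neg, exp_nat_mul, exp_log hS]
  have hPn : ∀ x : Fin n → α, 0 ≤ ∏ i, P (x i) := fun x => prod_nonneg fun i _ => (hP_pos _).le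
  have hQn : ∀ x : Fin n → α, 0 ≤ ∏ i, Q (x i) := fun x => prod_nonneg fun i _ => (hQ_pos _).le
  rw [hPe, hexp]
  calc _ ≤ _ := sInf_bayesError_le_half_chernoffCoeff hPn hQn hl
    _ = (1 / 2) * chernoffCoeff P Q l ^ n := by
        rw [chernoffCoeff_pi (fun a => (hP_pos a).le) (fun a => (hQ_pos a).le)]
    _ ≤ chernoffCoeff P Q l ^ n := by linarith [pow_nonneg hS.le n]

/-- **Chernoff bound on the Bayesian error.**  Let `P` and `Q` be everywhere-positive
probability mass functions on a finite alphabet `α`, with equal priors `1/2` on the two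
hypotheses.  For each `n`, the minimal Bayesian probability of error
`P_e^(n) = min_{A ⊆ αⁿ} [ (1/2) P^⊗n(αⁿ \ A) + (1/2) Q^⊗n(A) ]` satisfies
`P_e^(n) ≤ exp (−n C(P,Q))`, where
`C(P,Q) = sup_{0 ≤ λ ≤ 1} (−log ∑ a, (P a)^λ (Q a)^(1−λ))` is the Chernoff information. -/
theorem bayesian_error_le_exp_neg_chernoff
    {α : Type*} [Fintype α] [Nonempty α] [DecidableEq α]
    (P Q : α → ℝ)
    (hP_pos : ∀ a, 0 < P a) (hP_sum : ∑ a, P a = 1)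
    (hQ_pos : ∀ a, 0 < Q a) (hQ_sum : ∑ a, Q a = 1)
    (C : ℝ)
    (hC : C = sSup { c : ℝ | ∃ l ∈ Set.Icc (0 : ℝ) 1,
        c = -Real.log (∑ a, P a ^ l * Q a ^ (1 - l)) })
    (n : ℕ)
    (Pe : ℝ)
    (hPe : Pe = sInf { e : ℝ | ∃ A : Finset (Fin n → α),
        e = (1 / 2) * (∑ x ∈ Aᶜ, ∏ i, P (x i)) + (1 / 2) * (∑ x ∈ A, ∏ i, Q (x i)) }) :
    Pe ≤ Real.exp (-(n : ℝ) * C) :=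
  bayesian_error_le_exp_neg_chernoff_general P Q hP_pos hQ_pos C hC n Pe hPe
end

section
/- (Reverse Pinsker inequality.) Let P and Q be probability mass functions on a common finite alphabet 𝒜 with Q_min = min_{a∈𝒜} Q(a) > 0. Then D_KL(P‖Q) ≤ (1/Q_min) · |P − Q|², where |P − Q| = ∑_{a∈𝒜} |P(a) − Q(a)| is the total variation (L¹) distance between P and Q and the divergence is measured in nats. -/
/-!
The bound `log x ≤ x - 1`, applied at `x = P a / Q a`, dominates the divergence by the
χ²-divergence `∑ a, (P a - Q a) ^ 2 / Q a`, since the linear terms `P a - Q a` sum to zero.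
Bounding each denominator below by `Q_min` and the ℓ² norm by the ℓ¹ norm finishes the proof.
-/

open Finset Real

lemma mul_log_div_le_sq_sub_div_add_sub {p q : ℝ} (hp : 0 ≤ p) (hq : 0 < q) :
    p * log (p / q) ≤ (p - q) ^ 2 / q + (p - q) := by
  rcases hp.eq_or_lt with rfl | hp
  · simp [sq, hq.ne']
  calc p * log (p / q) ≤ p * (p / q - 1) :=
        mul_le_mul_of_nonneg_left (log_le_sub_one_of_pos (div_pos hp hq)) hp.le
    _ = (p - q) ^ 2 / q + (p - q) := by field_simp; ring

section

variable {ι : Type*} {s : Finset ι}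

theorem sum_mul_log_div_le_sum_sq_sub_div {p q : ι → ℝ} (hp : ∀ i ∈ s, 0 ≤ p i)
    (hq : ∀ i ∈ s, 0 < q i) (hsum : ∑ i ∈ s, p i = ∑ i ∈ s, q i) :
    ∑ i ∈ s, p i * log (p i / q i) ≤ ∑ i ∈ s, (p i - q i) ^ 2 / q i :=
  calc ∑ i ∈ s, p i * log (p i / q i)
      ≤ ∑ i ∈ s, ((p i - q i) ^ 2 / q i + (p i - q i)) :=
        sum_le_sum fun i hi => mul_log_div_le_sq_sub_div_add_sub (hp i hi) (hq i hi)
    _ = ∑ i ∈ s, (p i - q i) ^ 2 / q i := by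
        rw [sum_add_distrib, sum_sub_distrib, hsum, sub_self, add_zero]

theorem sum_sq_div_le_one_div_mul_sum_sq {x q : ι → ℝ} {m : ℝ} (hm : 0 < m)
    (hq : ∀ i ∈ s, m ≤ q i) :
    ∑ i ∈ s, x i ^ 2 / q i ≤ (1 / m) * ∑ i ∈ s, x i ^ 2 := by
  rw [mul_sum]
  refine sum_le_sum fun i hi => ?_
  rw [one_div_mul_eq_div]
  exact div_le_div_of_nonneg_left (sq_nonneg _) hm (hq i hi)

theorem sum_sq_le_sq_sum_abs (x : ι → ℝ) : ∑ i ∈ s, x i ^ 2 ≤ (∑ i ∈ s, |x i|) ^ 2 := by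
  simpa only [sq_abs] using sum_sq_le_sq_sum_of_nonneg (s := s) fun i _ => abs_nonneg (x i)

end

/-- **Reverse Pinsker inequality.**  Let `P` and `Q` be probability mass functions on a common
finite alphabet `α` with `Q_min = min_a Q a > 0`.  Then, in nats,
`D_KL(P‖Q) ≤ (1 / Q_min) * |P − Q|²`,
where `|P − Q| = ∑ a, |P a − Q a|` is the L¹ (total variation) distance. -/
theorem reverse_pinsker
    {α : Type*} [Fintype α] [Nonempty α]
    (P Q : α → ℝ)
    (hP_nonneg : ∀ a, 0 ≤ P a) (hP_sum : ∑ a, P a = 1)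
    (hQ_pos : ∀ a, 0 < Q a) (hQ_sum : ∑ a, Q a = 1)
    (Qmin : ℝ) (hQmin : Qmin = Finset.univ.inf' Finset.univ_nonempty Q) :
    ∑ a ∈ Finset.univ.filter (fun a => 0 < P a), P a * Real.log (P a / Q a) ≤
      (1 / Qmin) * (∑ a, |P a - Q a|) ^ 2 := by
  have hQmin_pos : 0 < Qmin := by
    rw [hQmin, lt_inf'_iff]
    exact fun a _ => hQ_pos a
  have hQmin_le : ∀ a ∈ univ, Qmin ≤ Q a := fun a ha => hQmin ▸ inf'_le Q ha
  calc ∑ a ∈ univ.filter (fun a => 0 < P a), P a * log (P a / Q a)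
      = ∑ a, P a * log (P a / Q a) :=
        sum_filter_of_ne fun a _ h => (hP_nonneg a).lt_of_ne (left_ne_zero_of_mul h).symm
    _ ≤ ∑ a, (P a - Q a) ^ 2 / Q a :=
        sum_mul_log_div_le_sum_sq_sub_div (fun a _ => hP_nonneg a) (fun a _ => hQ_pos a)
          (hP_sum.trans hQ_sum.symm)
    _ ≤ (1 / Qmin) * ∑ a, (P a - Q a) ^ 2 := sum_sq_div_le_one_div_mul_sum_sq hQmin_pos hQmin_le
    _ ≤ (1 / Qmin) * (∑ a, |P a - Q a|) ^ 2 := by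
        gcongr
        exact sum_sq_le_sq_sum_abs _
end
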